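/- arXiv:2210.07184 — 5 statements merged into one kernel-verified Lean document; each statement's English description precedes it below -/
import Mathlib

section
/- Every extended transitive 2-player symmetric game has at least one (f, ε)-self-play sequence for every ε > 0, and every such sequence is finite. More precisely, if (x_n, y_n)_{0≤n≤2N} is an (f, ε)-self-play sequence in an extended transitive game with bounded function Φ and constant δ_ε > 0, then Φ(x_{2n}) > Φ(x_0) + n·δ_ε for all 1 ≤ n ≤ N, and no infinite such sequence exists. -/
/-! Along a self-play sequence every step improves the payoff against the current strategy by
more than `ε`, so by extended transitivity it raises the potential `Φ` by more than `δε`. The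
potential therefore grows at least linearly in the number of steps, which a bounded `Φ` cannot
sustain forever. -/

section IncrementBounds

variable {α : Type*} [CommRing α] [LinearOrder α] [IsStrictOrderedRing α] {a : ℕ → α} {δ : α}

theorem add_mul_lt_of_forall_lt_sub {N : ℕ} (h : ∀ k < N, δ < a (k + 1) - a k) {n : ℕ}
    (hn : 1 ≤ n) (hnN : n ≤ N) : a 0 + n * δ < a n := by
  induction n, hn using Nat.le_induction with
  | base => simpa [add_comm, lt_sub_iff_add_lt] using h 0 (by omega)
  | succ k hk ih =>
    push_cast
    linarith [h k (by omega), ih (by omega)]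

theorem not_bddAbove_range_of_forall_lt_sub [Archimedean α] (hδ : 0 < δ)
    (h : ∀ k, δ < a (k + 1) - a k) : ¬ BddAbove (Set.range a) := by
  rintro ⟨M, hM⟩
  obtain ⟨n, hn⟩ := Archimedean.arch (M - a 0) hδ
  have hgrowth := add_mul_lt_of_forall_lt_sub (N := n + 1) (fun k _ ↦ h k) le_add_self le_rfl
  have hM' := hM (Set.mem_range_self (n + 1))
  rw [nsmul_eq_mul] at hn
  push_cast at hgrowth
  linarith

end IncrementBounds

theorem stmt_7_general {S : Type*} [Nonempty S] (u : S → S → ℝ) (Φ : S → ℝ)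
    (hΦbdd : ∃ M : ℝ, ∀ x, |Φ x| ≤ M)
    (ε δε : ℝ) (hδε : 0 < δε)
    (htrans : ∀ x y : S, u y x - u x x > ε → Φ y - Φ x > δε) :
    (∃ (N : ℕ) (z : ℕ → S), ∀ n < N, u (z (n + 1)) (z n) > u (z n) (z n) + ε) ∧
      (∀ (N : ℕ) (z : ℕ → S),
        (∀ n < N, u (z (n + 1)) (z n) > u (z n) (z n) + ε) →
        ∀ n, 1 ≤ n → n ≤ N → Φ (z n) > Φ (z 0) + n * δε) ∧
      ¬ ∃ z : ℕ → S, ∀ n : ℕ, u (z (n + 1)) (z n) > u (z n) (z n) + ε := by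
  have hstep : ∀ x y, u y x > u x x + ε → δε < Φ y - Φ x := fun x y h ↦
    htrans x y (by linarith)
  refine ⟨⟨0, fun _ ↦ Classical.arbitrary S, by simp⟩,
    fun N z hz n hn hnN ↦ add_mul_lt_of_forall_lt_sub (a := fun k ↦ Φ (z k))
      (fun k hk ↦ hstep _ _ (hz k hk)) hn hnN, ?_⟩
  rintro ⟨z, hz⟩
  obtain ⟨M, hM⟩ := hΦbdd
  refine not_bddAbove_range_of_forall_lt_sub (a := fun k ↦ Φ (z k)) hδε (fun k ↦ hstep _ _ (hz k)) ⟨M, ?_⟩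
  rintro _ ⟨n, rfl⟩
  exact (abs_le.mp (hM (z n))).2

/-- In an extended transitive 2-player symmetric game (with payoff u, bounded
skill Φ and margin δε > 0 for level ε > 0), (u,ε)-self-play sequences exist
(e.g. the empty one generated by any point), the skill strictly accumulates
along any such sequence: Φ(z_n) > Φ(z_0) + n·δε for 1 ≤ n ≤ N, and no
infinite (u,ε)-self-play sequence exists. A self-play sequence of size 2N
generated by (z_n) is encoded by the improvement property
u(z_{n+1}, z_n) > u(z_n, z_n) + ε for all n < N. -/
theorem stmt_7 {S : Type*} [Nonempty S] (u : S → S → ℝ) (Φ : S → ℝ)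
    (hΦbdd : ∃ M : ℝ, ∀ x, |Φ x| ≤ M)
    (ε δε : ℝ) (hε : 0 < ε) (hδε : 0 < δε)
    (htrans : ∀ x y : S, u y x - u x x > ε → Φ y - Φ x > δε) :
    (∃ (N : ℕ) (z : ℕ → S), ∀ n < N, u (z (n + 1)) (z n) > u (z n) (z n) + ε) ∧
      (∀ (N : ℕ) (z : ℕ → S),
        (∀ n < N, u (z (n + 1)) (z n) > u (z n) (z n) + ε) →
        ∀ n, 1 ≤ n → n ≤ N → Φ (z n) > Φ (z 0) + n * δε) ∧
      ¬ ∃ z : ℕ → S, ∀ n : ℕ, u (z (n + 1)) (z n) > u (z n) (z n) + ε :=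
  stmt_7_general u Φ hΦbdd ε δε hδε htrans
end

section
/- An extended transitive 2-player symmetric game has a symmetric pure strategy ε-Nash equilibrium for every ε > 0; i.e., there exists x ∈ S such that u(y, x) ≤ u(x, x) + ε for all y ∈ S. Moreover such a point is reached as the endpoint of a maximal (u, ε)-self-play sequence. -/
/-!
Call `y` an `ε`-better response to `x` when `u(y,x) > u(x,x) + ε`. Along every better-response
step the bounded potential `Φ` rises by at least `δ_ε`, so there is no infinite better-response
path: the relation is conversely well-founded. Following better responses from any strategy
therefore stops after finitely many steps, and it can only stop at a point admitting no
`ε`-better response, i.e. at a symmetric `ε`-Nash equilibrium.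
-/

theorem wellFounded_flip_of_potential {α : Type*} {r : α → α → Prop} (Φ : α → ℝ) {M δ : ℝ}
    (hM : ∀ x, Φ x ≤ M) (hδ : 0 < δ) (hr : ∀ x y, r x y → Φ x + δ < Φ y) :
    WellFounded (flip r) := by
  refine wellFounded_iff_isEmpty_descending_chain.mpr ⟨fun ⟨z, hz⟩ => ?_⟩
  have hrise : ∀ n : ℕ, Φ (z 0) + n * δ ≤ Φ (z n) := by
    intro n
    induction n with
    | zero => simp
    | succ n ih =>
      have := hr _ _ (hz n)
      push_cast
      linarith
  obtain ⟨n, hn⟩ := exists_nat_gt ((M - Φ (z 0)) / δ)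
  have := (div_lt_iff₀ hδ).mp hn
  linarith [hrise n, hM (z n)]

theorem exists_chain_to_maximal {α : Type*} {r : α → α → Prop} (hwf : WellFounded (flip r))
    (x : α) :
    ∃ (N : ℕ) (z : ℕ → α), z 0 = x ∧ (∀ n < N, r (z n) (z (n + 1))) ∧ ∀ y, ¬ r (z N) y := by
  induction x using hwf.induction with
  | _ x ih =>
    by_cases hmax : ∀ y, ¬ r x y
    · exact ⟨0, fun _ => x, rfl, fun n hn => absurd hn n.not_lt_zero, hmax⟩
    · obtain ⟨y, hxy⟩ := not_forall_not.mp hmax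
      obtain ⟨N, z, rfl, hchain, hend⟩ := ih y hxy
      refine ⟨N + 1, fun | 0 => x | n + 1 => z n, rfl, ?_, hend⟩
      rintro (_ | n) hn
      · exact hxy
      · exact hchain n (by omega)

/-- An extended transitive 2-player symmetric game has a symmetric pure
strategy ε-Nash equilibrium for every ε > 0, reached as the endpoint of a
finite (u,ε)-self-play sequence (encoded by its generating sequence (z_n)). -/
theorem stmt_8 {S : Type*} [Nonempty S] (u : S → S → ℝ)
    (hET : ∃ Φ : S → ℝ, (∃ M : ℝ, ∀ x, |Φ x| ≤ M) ∧
      ∀ ε : ℝ, 0 < ε → ∃ δ : ℝ, 0 < δ ∧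
        ∀ x y : S, u y x - u x x > ε → Φ y - Φ x > δ) :
    ∀ ε : ℝ, 0 < ε →
      ∃ (N : ℕ) (z : ℕ → S),
        (∀ n < N, u (z (n + 1)) (z n) > u (z n) (z n) + ε) ∧
        ∀ y : S, u y (z N) ≤ u (z N) (z N) + ε := by
  obtain ⟨Φ, ⟨M, hM⟩, hΦ⟩ := hET
  intro ε hε
  obtain ⟨δ, hδ, hrise⟩ := hΦ ε hε
  let betterResponse : S → S → Prop := fun x y => u x x + ε < u y x
  have hwf : WellFounded (flip betterResponse) :=
    wellFounded_flip_of_potential Φ (fun x => (abs_le.mp (hM x)).2) hδ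
      fun x y (hxy : u x x + ε < u y x) => by linarith [hrise x y (by linarith)]
  obtain ⟨N, z, -, hchain, hend⟩ := exists_chain_to_maximal hwf (Classical.arbitrary S)
  exact ⟨N, z, hchain, fun y => not_lt.mp (hend y)⟩
end

section
/- Let S be a compact metric space (or a compact subset of ℝ^d) and u: S × S → ℝ continuous. If the 2-player symmetric game with payoff u is extended transitive, then it has a symmetric pure strategy Nash equilibrium: there exists x* ∈ S with u(y, x*) ≤ u(x*, x*) for all y ∈ S. -/
/-!
Extended transitivity makes every `ε`-equilibrium set nonempty: otherwise a chain of deviations,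
each gaining more than `ε`, would raise the bounded potential by `δ_ε` at each step. By continuity
these sets are closed and they shrink as `ε ↓ 0`, so by compactness their intersection, which is
the set of symmetric pure Nash equilibria, is nonempty.
-/

open Set

/-- `u y x` is the payoff of playing `y` against `x`. -/
def epsNashSet {S : Type*} (u : S → S → ℝ) (ε : ℝ) : Set S :=
  {x | ∀ y, u y x ≤ u x x + ε}

section EpsNash

variable {S : Type*} {u : S → S → ℝ}

theorem epsNashSet_mono : Monotone (epsNashSet u) :=
  fun _ _ hε _ hx y => (hx y).trans (by gcongr)

theorem isClosed_epsNashSet [TopologicalSpace S] (hu : Continuous fun p : S × S => u p.1 p.2)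
    (ε : ℝ) : IsClosed (epsNashSet u ε) := by
  rw [epsNashSet, ofPred_forall]
  exact isClosed_iInter fun y =>
    isClosed_le (hu.comp (continuous_const.prodMk continuous_id))
      ((hu.comp (continuous_id.prodMk continuous_id)).add continuous_const)

theorem iInter_epsNashSet :
    ⋂ ε : Ioi (0 : ℝ), epsNashSet u ε = {x | ∀ y, u y x ≤ u x x} := by
  ext x
  simp only [mem_iInter, epsNashSet, mem_ofPred_eq, Subtype.forall, mem_Ioi]
  exact ⟨fun h y => le_of_forall_pos_le_add fun ε hε => h ε hε y,
    fun h ε hε y => (h y).trans (le_add_of_nonneg_right hε.le)⟩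

theorem exists_nash_of_forall_epsNashSet_nonempty [TopologicalSpace S] [CompactSpace S]
    (hu : Continuous fun p : S × S => u p.1 p.2)
    (hne : ∀ ε > 0, (epsNashSet u ε).Nonempty) : ∃ x, ∀ y, u y x ≤ u x x := by
  have key := IsCompact.nonempty_iInter_of_directed_nonempty_isCompact_isClosed
    (fun ε : Ioi (0 : ℝ) => epsNashSet u ε)
    (epsNashSet_mono.comp (Subtype.mono_coe _)).directed_ge
    (fun ε => hne ε ε.2) (fun ε => (isClosed_epsNashSet hu ε).isCompact)
    (fun ε => isClosed_epsNashSet hu ε)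
  rwa [iInter_epsNashSet] at key

end EpsNash

theorem not_bddAbove_range_of_forall_add_le {S : Type*} [Nonempty S] {Φ : S → ℝ} {f : S → S}
    {δ : ℝ} (hδ : 0 < δ) (hf : ∀ x, Φ x + δ ≤ Φ (f x)) : ¬ BddAbove (range Φ) := by
  rintro ⟨M, hM⟩
  obtain ⟨x₀⟩ := ‹Nonempty S›
  have hiter : ∀ k : ℕ, Φ x₀ + k * δ ≤ Φ (f^[k] x₀) := by
    intro k
    induction k with
    | zero => simp
    | succ k ih =>
      rw [Function.iterate_succ_apply']
      push_cast
      linarith [hf (f^[k] x₀)]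
  obtain ⟨k, hk⟩ := Archimedean.arch (M - Φ x₀ + 1) hδ
  linarith [hiter k, hM (mem_range_self (f^[k] x₀)), nsmul_eq_mul k δ]

theorem epsNashSet_nonempty_of_potential {S : Type*} [Nonempty S] {u : S → S → ℝ} {Φ : S → ℝ}
    (hΦ : BddAbove (range Φ)) {ε δ : ℝ} (hδ : 0 < δ)
    (h : ∀ x y : S, u y x - u x x > ε → Φ y - Φ x > δ) : (epsNashSet u ε).Nonempty := by
  by_contra hempty
  simp only [not_nonempty_iff_eq_empty, eq_empty_iff_forall_notMem, epsNashSet, mem_ofPred_eq,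
    not_forall, not_le] at hempty
  choose f hf using hempty
  exact not_bddAbove_range_of_forall_add_le (f := f) hδ
    (fun x => by linarith [h x (f x) (by linarith [hf x])]) hΦ

/-- An extended transitive 2-player symmetric game with continuous payoff on a
compact metric strategy space has a symmetric pure strategy Nash equilibrium. -/
theorem stmt_9 {S : Type*} [MetricSpace S] [CompactSpace S] [Nonempty S]
    (u : S → S → ℝ) (hu : Continuous fun p : S × S => u p.1 p.2)
    (hET : ∃ Φ : S → ℝ, (∃ M : ℝ, ∀ x, |Φ x| ≤ M) ∧
      ∀ ε : ℝ, 0 < ε → ∃ δ : ℝ, 0 < δ ∧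
        ∀ x y : S, u y x - u x x > ε → Φ y - Φ x > δ) :
    ∃ xstar : S, ∀ y : S, u y xstar ≤ u xstar xstar := by
  obtain ⟨Φ, ⟨M, hM⟩, hΦ⟩ := hET
  have hbdd : BddAbove (range Φ) := ⟨M, forall_mem_range.2 fun x => (abs_le.1 (hM x)).2⟩
  refine exists_nash_of_forall_epsNashSet_nonempty hu fun ε hε => ?_
  obtain ⟨δ, hδ, h⟩ := hΦ ε hε
  exact epsNashSet_nonempty_of_potential hbdd hδ h
end

section
/- A 2-player symmetric game with pure strategy set S and payoff u is extended transitive if and only if there exists a bounded function Φ: S → ℝ and a continuous, strictly increasing function φ: [0,∞) → [0,∞) with φ(0) = 0 such that Φ(y) − Φ(x) ≥ φ(u(y,x) − u(x,x)) for all pairs (x,y) with u(y,x) − u(x,x) > 0. -/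
/-!
Given the bounded potential `Φ`, record every improving deviation as a data point
`(u y x - u x x, Φ y - Φ x)`. The largest monotone `1`-Lipschitz function lying below these
points is continuous, and it is positive on `(0, ∞)` precisely because of the
uniform `ε`-`δ` gap; multiplying it by `t / (t + 1)` makes it strictly increasing and zero at `0`
without leaving the data. Conversely, `δ := φ (ε / 2)` works.
-/

open Set

/-- For nonempty `D`: the largest monotone `1`-Lipschitz `ψ` with `ψ g ≤ d` on `D`. -/
noncomputable def lipschitzMinorant (D : Set (ℝ × ℝ)) (t : ℝ) : ℝ :=
  ⨅ p : D, (p : ℝ × ℝ).2 + max (t - (p : ℝ × ℝ).1) 0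

section LipschitzMinorant

variable {D : Set (ℝ × ℝ)}

theorem bddBelow_range_lipschitzMinorant (hD : ∀ p ∈ D, 0 ≤ p.2) (t : ℝ) :
    BddBelow (range fun p : D => (p : ℝ × ℝ).2 + max (t - (p : ℝ × ℝ).1) 0) := by
  refine ⟨0, ?_⟩
  rintro _ ⟨p, rfl⟩
  exact add_nonneg (hD p p.2) (le_max_right _ _)

theorem lipschitzMinorant_nonneg (hD : ∀ p ∈ D, 0 ≤ p.2) (t : ℝ) :
    0 ≤ lipschitzMinorant D t :=
  Real.iInf_nonneg fun p => add_nonneg (hD p p.2) (le_max_right _ _)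

theorem lipschitzMinorant_le (hD : ∀ p ∈ D, 0 ≤ p.2) {p : ℝ × ℝ} (hp : p ∈ D) :
    lipschitzMinorant D p.1 ≤ p.2 :=
  ciInf_le_of_le (bddBelow_range_lipschitzMinorant hD p.1) ⟨p, hp⟩ (by simp)

theorem lipschitzMinorant_monotone (hD : ∀ p ∈ D, 0 ≤ p.2) :
    Monotone (lipschitzMinorant D) := fun s t hst =>
  ciInf_mono (bddBelow_range_lipschitzMinorant hD s) fun _ => by gcongr

theorem lipschitzWith_one_lipschitzMinorant (hD : ∀ p ∈ D, 0 ≤ p.2) (hne : D.Nonempty) :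
    LipschitzWith 1 (lipschitzMinorant D) := by
  have : Nonempty D := hne.to_subtype
  refine LipschitzWith.of_le_add fun s t => ?_
  rw [← sub_le_iff_le_add]
  refine le_ciInf fun p => ?_
  have hst : max (s - (p : ℝ × ℝ).1) 0 ≤ max (t - (p : ℝ × ℝ).1) 0 + dist s t := by
    rw [Real.dist_eq]
    exact max_le (by linarith [le_max_left (t - (p : ℝ × ℝ).1) 0, le_abs_self (s - t)])
      (add_nonneg (le_max_right _ _) (abs_nonneg _))
  have := ciInf_le (bddBelow_range_lipschitzMinorant hD s) p
  unfold lipschitzMinorant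
  linarith

/-- A point with small `g` is beaten by the `(t - g)⁺` term, one with large `g` by the gap. -/
theorem lipschitzMinorant_pos (hD : ∀ p ∈ D, 0 ≤ p.2) (hne : D.Nonempty)
    (hgap : ∀ ε > 0, ∃ δ > 0, ∀ p ∈ D, ε < p.1 → δ < p.2) {t : ℝ} (ht : 0 < t) :
    0 < lipschitzMinorant D t := by
  have : Nonempty D := hne.to_subtype
  obtain ⟨δ, hδ, hgapδ⟩ := hgap (t / 2) (half_pos ht)
  refine (lt_min (half_pos ht) hδ).trans_le (le_ciInf fun p => ?_)
  rcases le_or_gt (p : ℝ × ℝ).1 (t / 2) with hsmall | hlarge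
  · have := le_max_left (t - (p : ℝ × ℝ).1) 0
    linarith [min_le_left (t / 2) δ, hD p p.2]
  · have := hgapδ p p.2 hlarge
    linarith [min_le_right (t / 2) δ, le_max_right (t - (p : ℝ × ℝ).1) 0]

end LipschitzMinorant

theorem strictMonoOn_mul_div_add_one {ψ : ℝ → ℝ} (hmono : MonotoneOn ψ (Ici 0))
    (hpos : ∀ t, 0 < t → 0 < ψ t) : StrictMonoOn (fun t => ψ t * (t / (t + 1))) (Ici 0) := by
  intro a ha b hb hab
  have ha' : (0 : ℝ) ≤ a := ha
  have hfrac : a / (a + 1) < b / (b + 1) := by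
    rw [div_lt_div_iff₀ (by linarith) (by linarith)]
    linarith
  calc ψ a * (a / (a + 1)) ≤ ψ b * (a / (a + 1)) :=
        mul_le_mul_of_nonneg_right (hmono ha hb hab.le) (by positivity)
    _ < ψ b * (b / (b + 1)) := mul_lt_mul_of_pos_left hfrac (hpos b (ha'.trans_lt hab))

theorem exists_modulus_le_of_gap {D : Set (ℝ × ℝ)} (hD : ∀ p ∈ D, 0 ≤ p.2)
    (hgap : ∀ ε > 0, ∃ δ > 0, ∀ p ∈ D, ε < p.1 → δ < p.2) :
    ∃ φ : ℝ → ℝ, ContinuousOn φ (Ici 0) ∧ StrictMonoOn φ (Ici 0) ∧ φ 0 = 0 ∧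
      (∀ t, 0 ≤ t → 0 ≤ φ t) ∧ ∀ p ∈ D, 0 ≤ p.1 → φ p.1 ≤ p.2 := by
  -- `(0, 0)` makes the infimum nonempty and is invisible to the gap condition.
  set D' := insert ((0 : ℝ), (0 : ℝ)) D
  have hD' : ∀ p ∈ D', 0 ≤ p.2 := by
    rintro p (rfl | hp)
    exacts [le_rfl, hD p hp]
  have hgap' : ∀ ε > 0, ∃ δ > 0, ∀ p ∈ D', ε < p.1 → δ < p.2 := by
    intro ε hε
    obtain ⟨δ, hδ, h⟩ := hgap ε hε
    refine ⟨δ, hδ, ?_⟩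
    rintro p (rfl | hp) hεp
    exacts [absurd hεp (not_lt.2 hε.le), h p hp hεp]
  set ψ := lipschitzMinorant D'
  have hfrac : ContinuousOn (fun t : ℝ => t / (t + 1)) (Ici 0) :=
    continuousOn_id.div (continuousOn_id.add continuousOn_const) fun t (ht : 0 ≤ t) =>
      (add_pos_of_nonneg_of_pos ht one_pos).ne'
  refine ⟨fun t => ψ t * (t / (t + 1)), ?_, ?_, by simp, ?_, ?_⟩
  · exact ((lipschitzWith_one_lipschitzMinorant hD' (insert_nonempty _ _)).continuous
      |>.continuousOn).mul hfrac
  · exact strictMonoOn_mul_div_add_one ((lipschitzMinorant_monotone hD').monotoneOn _)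
      fun t ht => lipschitzMinorant_pos hD' (insert_nonempty _ _) hgap' ht
  · intro t ht
    exact mul_nonneg (lipschitzMinorant_nonneg hD' t) (by positivity)
  · intro p hp hp1
    calc ψ p.1 * (p.1 / (p.1 + 1)) ≤ ψ p.1 :=
          mul_le_of_le_one_right (lipschitzMinorant_nonneg hD' _)
            ((div_le_one (by linarith)).2 (by linarith))
      _ ≤ p.2 := lipschitzMinorant_le hD' (mem_insert_of_mem _ hp)

theorem stmt_10_general {S : Type*} (u : S → S → ℝ) :
    (∃ Φ : S → ℝ, (∃ M : ℝ, ∀ x, |Φ x| ≤ M) ∧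
        ∀ ε : ℝ, 0 < ε → ∃ δ : ℝ, 0 < δ ∧
          ∀ x y : S, u y x - u x x > ε → Φ y - Φ x > δ) ↔
      (∃ (Φ : S → ℝ) (φ : ℝ → ℝ), (∃ M : ℝ, ∀ x, |Φ x| ≤ M) ∧
        ContinuousOn φ (Set.Ici 0) ∧ StrictMonoOn φ (Set.Ici 0) ∧
        φ 0 = 0 ∧ (∀ t : ℝ, 0 ≤ t → 0 ≤ φ t) ∧
        ∀ x y : S, u y x - u x x > 0 → Φ y - Φ x ≥ φ (u y x - u x x)) := by
  constructor
  · rintro ⟨Φ, hΦ, hgap⟩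
    set D := {p : ℝ × ℝ | ∃ x y, 0 < u y x - u x x ∧ p = (u y x - u x x, Φ y - Φ x)}
    have hD : ∀ p ∈ D, 0 ≤ p.2 := by
      rintro _ ⟨x, y, hxy, rfl⟩
      obtain ⟨δ, hδ, h⟩ := hgap _ (half_pos hxy)
      exact (hδ.trans (h x y (half_lt_self hxy))).le
    have hgapD : ∀ ε > 0, ∃ δ > 0, ∀ p ∈ D, ε < p.1 → δ < p.2 := by
      intro ε hε
      obtain ⟨δ, hδ, h⟩ := hgap ε hε
      exact ⟨δ, hδ, by rintro _ ⟨x, y, -, rfl⟩ hεp; exact h x y hεp⟩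
    obtain ⟨φ, hφc, hφm, hφ0, hφnn, hφD⟩ := exists_modulus_le_of_gap hD hgapD
    exact ⟨Φ, φ, hΦ, hφc, hφm, hφ0, hφnn,
      fun x y hxy => hφD _ ⟨x, y, hxy, rfl⟩ hxy.le⟩
  · rintro ⟨Φ, φ, hΦ, -, hφm, hφ0, -, hφ⟩
    refine ⟨Φ, hΦ, fun ε hε => ⟨φ (ε / 2), ?_, fun x y hxy => ?_⟩⟩
    · simpa [hφ0] using hφm self_mem_Ici (half_pos hε).le (half_pos hε)
    · calc φ (ε / 2) < φ (u y x - u x x) :=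
            hφm (half_pos hε).le (hε.le.trans hxy.le) ((half_lt_self hε).trans hxy)
        _ ≤ Φ y - Φ x := hφ x y (hε.trans hxy)

/-- Reformulation of extended transitivity: a 2-player symmetric game u is
extended transitive iff there exist a bounded Φ : S → ℝ and a continuous,
strictly increasing φ : [0,∞) → [0,∞) with φ(0) = 0 such that
Φ(y) − Φ(x) ≥ φ(u(y,x) − u(x,x)) whenever u(y,x) − u(x,x) > 0. -/
theorem stmt_10 {S : Type*} [Nonempty S] (u : S → S → ℝ) :
    (∃ Φ : S → ℝ, (∃ M : ℝ, ∀ x, |Φ x| ≤ M) ∧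
        ∀ ε : ℝ, 0 < ε → ∃ δ : ℝ, 0 < δ ∧
          ∀ x y : S, u y x - u x x > ε → Φ y - Φ x > δ) ↔
      (∃ (Φ : S → ℝ) (φ : ℝ → ℝ), (∃ M : ℝ, ∀ x, |Φ x| ≤ M) ∧
        ContinuousOn φ (Set.Ici 0) ∧ StrictMonoOn φ (Set.Ici 0) ∧
        φ 0 = 0 ∧ (∀ t : ℝ, 0 ≤ t → 0 ≤ φ t) ∧
        ∀ x y : S, u y x - u x x > 0 → Φ y - Φ x ≥ φ (u y x - u x x)) :=
  stmt_10_general u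
end

section
/- (Shared equilibria coincide with Nash equilibria of the underlying game.) Consider n players each choosing a policy, with utilities V_i(π_1, …, π_n) ∈ ℝ. Identify a shared policy with the tuple (π(·|1), …, π(·|n)) = (π_1, …, π_n). Define V̂(π, η) := (1/n) Σ_{i=1}^n V_i with player i using π_i := π(·|i) and all players j ≠ i using η(·|j). Then (π_1*, …, π_n*) is a Nash equilibrium of the underlying game (i.e., V_i(η, π*_{−i}) ≤ V_i(π*_i, π*_{−i}) for all i and all η) if and only if the corresponding shared policy π* is a shared equilibrium, i.e., V̂(π', π*) ≤ V̂(π*, π*) for every shared policy π'. -/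
/-!
Evaluated at the symmetric point, `n * (V̂(π', π) - V̂(π, π))` is the sum over the players `i` of
the gain of `i` from deviating alone to `π' i`. If `π` is a Nash equilibrium every such gain is
nonpositive; conversely, a shared policy that differs from `π` at the single index `i` produces
exactly one nonzero gain, that of player `i`.
-/

open Function

namespace Game

variable {ι P : Type*} [Fintype ι] [DecidableEq ι]

def IsNashEquilibrium (V : ι → (ι → P) → ℝ) (π : ι → P) : Prop :=
  ∀ i η, V i (update π i η) ≤ V i π

theorem sum_update_update_sub_sum (V : ι → (ι → P) → ℝ) (π : ι → P) (i : ι) (η : P) :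
    ∑ j, V j (update π j (update π i η j)) - ∑ j, V j π = V i (update π i η) - V i π := by
  rw [← Finset.sum_sub_distrib, Fintype.sum_eq_single i fun j hj => ?_]
  · simp
  · simp [update_of_ne hj]

theorem isNashEquilibrium_iff_forall_sum_update_le (V : ι → (ι → P) → ℝ) (π : ι → P) :
    IsNashEquilibrium V π ↔ ∀ π' : ι → P, ∑ i, V i (update π i (π' i)) ≤ ∑ i, V i π := by
  refine ⟨fun h π' => Finset.sum_le_sum fun i _ => h i (π' i), fun h i η => ?_⟩
  have hgain := sum_update_update_sub_sum V π i η
  linarith [h (update π i η)]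

end Game

/-- Shared equilibria coincide with Nash equilibria of the underlying game.
A shared policy is identified with the tuple π : Fin n → P of per-type
policies; V̂(π', π) = (1/n) ∑ᵢ (utility of player i playing π'(i) while every
j ≠ i plays π(j)). Then π* is a Nash equilibrium of the underlying game iff
π* is a shared equilibrium, i.e. no shared-policy deviation improves V̂ from
the symmetric point (π*, π*). -/
theorem stmt_17 {n : ℕ} (hn : 0 < n) {P : Type*}
    (V : Fin n → (Fin n → P) → ℝ)
    (Vhat : (Fin n → P) → (Fin n → P) → ℝ)
    (hVhat : ∀ π η : Fin n → P,
      Vhat π η = (1 / (n : ℝ)) * ∑ i : Fin n, V i (Function.update η i (π i)))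
    (πstar : Fin n → P) :
    (∀ i : Fin n, ∀ η : P, V i (Function.update πstar i η) ≤ V i πstar) ↔
      (∀ π' : Fin n → P, Vhat π' πstar ≤ Vhat πstar πstar) := by
  change Game.IsNashEquilibrium V πstar ↔ _
  rw [Game.isNashEquilibrium_iff_forall_sum_update_le]
  refine forall_congr' fun π' => ?_
  rw [hVhat, hVhat, mul_le_mul_iff_right₀ (by positivity)]
  simp only [update_eq_self]
end
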